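/- Guaranteed upper bound for the total flux error of the nonlinear problem (abstract form of the first inequality in (5.31) of Remark 5.10): Let H be a real Hilbert space, V a closed subspace of H with orthogonal projection P_V, c, C ∈ ℝ with 0 < c ≤ C, and Ψ : H → H a map such that for all x, y ∈ H, c‖x − y‖² ≤ ⟪x − y, Ψ(x) − Ψ(y)⟫ and ‖Ψ(x) − Ψ(y)‖ ≤ C‖x − y‖. Let u ∈ H with Ψ(u) ∈ V. Then for every u_h ∈ H, √c · ‖u − u_h‖ ≤ (C/√c) · ‖P_V(u − u_h)‖ + (1/√c) · inf_{v ∈ V} ‖Ψ(u_h) − v‖. -/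

import Mathlib

/-!
Put `e = u - u_h` and `z = Ψ u - Ψ u_h`, and split `⟪e, z⟫ = ⟪P_V e, z⟫ + ⟪e, z - P_V z⟫`.
Strong monotonicity bounds `c ‖e‖²` by `⟪e, z⟫`, Lipschitz continuity bounds the first term by
`C ‖P_V e‖ ‖e‖`, and since `Ψ u ∈ V` we have `z - P_V z = -(Ψ u_h - P_V Ψ u_h)`, whose norm is the
distance from `Ψ u_h` to `V`. Dividing by `‖e‖` and then by `√c` gives the bound.
-/

open Metric

namespace Submodule

variable {𝕜 E : Type*} [RCLike 𝕜] [NormedAddCommGroup E] [InnerProductSpace 𝕜 E]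

theorem infDist_eq_norm_sub_starProjection (K : Submodule 𝕜 E) [K.HasOrthogonalProjection]
    (y : E) : infDist y K = ‖y - K.starProjection y‖ := by
  rw [starProjection_minimal, infDist_eq_iInf]
  simp only [dist_eq_norm]
  rfl

end Submodule

section

variable {H : Type*} [NormedAddCommGroup H] [InnerProductSpace ℝ H]

theorem real_inner_le_norm_starProjection_mul_add (V : Submodule ℝ H) [V.HasOrthogonalProjection]
    (e z : H) : inner ℝ e z ≤ ‖V.starProjection e‖ * ‖z‖ + ‖e‖ * ‖z - V.starProjection z‖ := by
  have hsplit :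
      inner ℝ e z = inner ℝ (V.starProjection e) z + inner ℝ e (z - V.starProjection z) := by
    rw [inner_sub_right, V.inner_starProjection_left_eq_right]; ring
  rw [hsplit]
  gcongr <;> exact real_inner_le_norm _ _

theorem mul_norm_sub_le_norm_starProjection_add_infDist (V : Submodule ℝ H)
    [V.HasOrthogonalProjection] {Ψ : H → H} {c C : ℝ} {u uh : H} (hu : Ψ u ∈ V)
    (hmono : c * ‖u - uh‖ ^ 2 ≤ inner ℝ (u - uh) (Ψ u - Ψ uh))
    (hlip : ‖Ψ u - Ψ uh‖ ≤ C * ‖u - uh‖) :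
    c * ‖u - uh‖ ≤ C * ‖V.starProjection (u - uh)‖ + infDist (Ψ uh) V := by
  set e := u - uh
  set z := Ψ u - Ψ uh
  have hz : ‖z - V.starProjection z‖ = infDist (Ψ uh) V := by
    rw [V.infDist_eq_norm_sub_starProjection, ← norm_neg]
    simp only [z, map_sub, V.starProjection_eq_self_iff.2 hu]
    congr 1; abel
  have hquad : c * ‖e‖ ^ 2 ≤ ‖e‖ * (C * ‖V.starProjection e‖ + infDist (Ψ uh) V) :=
    calc c * ‖e‖ ^ 2 ≤ inner ℝ e z := hmono
      _ ≤ ‖V.starProjection e‖ * ‖z‖ + ‖e‖ * ‖z - V.starProjection z‖ :=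
        real_inner_le_norm_starProjection_mul_add V e z
      _ ≤ ‖V.starProjection e‖ * (C * ‖e‖) + ‖e‖ * infDist (Ψ uh) V := by rw [hz]; gcongr
      _ = ‖e‖ * (C * ‖V.starProjection e‖ + infDist (Ψ uh) V) := by ring
  rcases (norm_nonneg e).eq_or_lt with he | he
  · rw [← he, norm_eq_zero.1 he.symm, map_zero, norm_zero]
    simpa using infDist_nonneg
  · exact le_of_mul_le_mul_left (by linarith) he

end

theorem nonlinear_total_error_upper_bound_general
    {H : Type*} [NormedAddCommGroup H] [InnerProductSpace ℝ H]
    (V : Submodule ℝ H) [CompleteSpace V]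
    (c C : ℝ) (hc : 0 < c) (Ψ : H → H)
    (hmono : ∀ x y : H, c * ‖x - y‖ ^ 2 ≤ (inner ℝ (x - y) (Ψ x - Ψ y) : ℝ))
    (hlip : ∀ x y : H, ‖Ψ x - Ψ y‖ ≤ C * ‖x - y‖)
    (u : H) (hu : Ψ u ∈ V) :
    ∀ uh : H,
      Real.sqrt c * ‖u - uh‖ ≤
        (C / Real.sqrt c) * ‖(V.orthogonalProjectionOnto (u - uh) : H)‖ +
          (1 / Real.sqrt c) * Metric.infDist (Ψ uh) (V : Set H) := by
  intro uh
  have hsqrt : 0 < Real.sqrt c := Real.sqrt_pos.2 hc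
  have hbound := mul_norm_sub_le_norm_starProjection_add_infDist V hu (hmono u uh) (hlip u uh)
  calc Real.sqrt c * ‖u - uh‖ = c * ‖u - uh‖ / Real.sqrt c := by
        rw [eq_div_iff hsqrt.ne', mul_right_comm, Real.mul_self_sqrt hc.le]
    _ ≤ (C * ‖V.starProjection (u - uh)‖ + infDist (Ψ uh) V) / Real.sqrt c := by gcongr
    _ = _ := by rw [V.starProjection_apply]; ring

/-- Guaranteed upper bound for the total flux error of the nonlinear problem:
`√c · ‖u − u_h‖ ≤ (C/√c) · ‖P_V (u − u_h)‖ + (1/√c) · inf_{v ∈ V} ‖Ψ(u_h) − v‖`. -/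
theorem nonlinear_total_error_upper_bound
    {H : Type*} [NormedAddCommGroup H] [InnerProductSpace ℝ H] [CompleteSpace H]
    (V : Submodule ℝ H) [CompleteSpace V]
    (c C : ℝ) (hc : 0 < c) (hcC : c ≤ C) (Ψ : H → H)
    (hmono : ∀ x y : H, c * ‖x - y‖ ^ 2 ≤ (inner ℝ (x - y) (Ψ x - Ψ y) : ℝ))
    (hlip : ∀ x y : H, ‖Ψ x - Ψ y‖ ≤ C * ‖x - y‖)
    (u : H) (hu : Ψ u ∈ V) :
    ∀ uh : H,
      Real.sqrt c * ‖u - uh‖ ≤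
        (C / Real.sqrt c) * ‖(V.orthogonalProjectionOnto (u - uh) : H)‖ +
          (1 / Real.sqrt c) * Metric.infDist (Ψ uh) (V : Set H) :=
  nonlinear_total_error_upper_bound_general V c C hc Ψ hmono hlip u hu
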